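/- arXiv:2409.02602 — 6 statements merged into one kernel-verified Lean document; each statement's English description precedes it below -/
import Mathlib

section
/- The singular values of the matrix A_α(P⃗_n) = α Δ⁺ + (1-α) A of the directed path P⃗_n on n vertices (arcs (v_1,v_2),...,(v_{n-1},v_n)) are 0 with multiplicity 1, together with √(2α² - 2α + 1 + 2α(1-α)cos(jπ/n)) for j = 1,2,...,n-1. -/
open Matrix Real

/-- Adjacency matrix of the directed path on `n` vertices, arcs `(v_i, v_{i+1})`. -/
def pathAdj (n : ℕ) : Matrix (Fin n) (Fin n) ℝ :=
  Matrix.of fun i j => if (j : ℕ) = (i : ℕ) + 1 then 1 else 0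

/-- Outdegree diagonal matrix of the directed path: outdegree 1 except the last vertex. -/
def pathOut (n : ℕ) : Matrix (Fin n) (Fin n) ℝ :=
  Matrix.diagonal fun i => if (i : ℕ) < n - 1 then 1 else 0

/-!
Write `E = pathOut n` and `N = pathAdj n`. Since `E² = E`, `E N = N` and `N Nᵀ = E`, the Gram
matrix `A_α A_αᵀ` equals `E T E`, where `T = (α² + (1-α)²) I + α(1-α) (N + Nᵀ)` is tridiagonal
Toeplitz. The last row and column of `E T E` vanish and its leading block is the tridiagonal
Toeplitz matrix of size `n - 1`, so the characteristic polynomial is `X` times that of the block.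
A tridiagonal Toeplitz matrix `a I + b (N + Nᵀ)` of size `m` is diagonalised by the discrete sine
vectors `k ↦ sin ((k+1) θ_j)`, `θ_j = (j+1)π/(m+1)`, with eigenvalues `a + 2b cos θ_j`. These
vectors form a basis because they are eigenvectors of `N + Nᵀ` for the pairwise distinct
eigenvalues `2 cos θ_j`.
-/

open Polynomial

theorem Matrix.charpoly_eq_prod_of_mul_eq_mul_diagonal {R ι : Type*} [CommRing R] [Fintype ι]
    [DecidableEq ι] {M P : Matrix ι ι R} {d : ι → R} (hP : IsUnit P)
    (h : M * P = P * diagonal d) : M.charpoly = ∏ i, (X - C (d i)) := by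
  rw [← charpoly_diagonal, ← charpoly_units_conj' hP.unit M, IsUnit.unit_spec, Matrix.mul_assoc,
    h, nonsing_inv_mul_cancel_left _ _ ((isUnit_iff_isUnit_det P).1 hP)]

theorem Matrix.charpoly_eq_X_mul_of_row_last_eq_zero {R : Type*} [CommRing R] {m : ℕ}
    (M : Matrix (Fin (m + 1)) (Fin (m + 1)) R) (h : ∀ j, M (Fin.last m) j = 0) :
    M.charpoly = X * (M.submatrix Fin.castSucc Fin.castSucc).charpoly := by
  rw [charpoly, det_succ_row _ (Fin.last m), Fintype.sum_eq_single (Fin.last m)]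
  · rw [charmatrix_apply_eq, h, C_0, sub_zero, ← two_mul, pow_mul, neg_one_sq, one_pow, one_mul,
      Fin.succAbove_last, charpoly]
    congr 2
    ext i j
    by_cases hij : i = j
    · simp [hij, charmatrix_apply_eq]
    · simp [hij, charmatrix_apply_ne, Fin.castSucc_inj]
  · intro j hj
    rw [charmatrix_apply_ne _ _ _ (Ne.symm hj), h, C_0, neg_zero, mul_zero, zero_mul]

theorem Polynomial.roots_X_mul_prod_X_sub_C {R ι : Type*} [CommRing R] [IsDomain R]
    (s : Finset ι) (f : ι → R) :
    (X * ∏ i ∈ s, (X - C (f i))).roots = 0 ::ₘ s.val.map f := by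
  conv_rhs => rw [← roots_multiset_prod_X_sub_C (0 ::ₘ s.val.map f)]
  rw [Multiset.map_cons, Multiset.prod_cons, C_0, sub_zero, Multiset.map_map,
    Finset.prod_eq_multiset_prod]
  rfl

section Tridiagonal

variable {n : ℕ}

theorem pathAdj_mulVec_apply (f : ℕ → ℝ) (i : Fin n) :
    (pathAdj n *ᵥ fun k => f k) i = if (i : ℕ) + 1 < n then f (i + 1) else 0 := by
  simp only [mulVec, dotProduct, pathAdj, of_apply, ite_mul, one_mul, zero_mul]
  split_ifs with h
  · rw [Fintype.sum_eq_single ⟨i + 1, h⟩ fun k hk => if_neg fun e => hk (Fin.ext e), if_pos rfl]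
  · exact Finset.sum_eq_zero fun k _ => if_neg (by omega)

theorem pathAdj_transpose_mulVec_apply (f : ℕ → ℝ) (i : Fin n) :
    ((pathAdj n)ᵀ *ᵥ fun k => f k) i = if 0 < (i : ℕ) then f (i - 1) else 0 := by
  simp only [mulVec, dotProduct, transpose_apply, pathAdj, of_apply, ite_mul, one_mul, zero_mul]
  split_ifs with h
  · rw [Fintype.sum_eq_single ⟨i - 1, by omega⟩
      fun k hk => if_neg fun e => hk (Fin.ext (by simp; omega)), if_pos (by simp; omega)]
  · exact Finset.sum_eq_zero fun k _ => if_neg (by omega)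

theorem pathAdj_add_transpose_mulVec_sin {θ : ℝ} (hθ : sin ((n + 1) * θ) = 0) :
    (pathAdj n + (pathAdj n)ᵀ) *ᵥ (fun k : Fin n => sin ((k + 1) * θ)) =
      (2 * cos θ) • fun k : Fin n => sin ((k + 1) * θ) := by
  ext i
  rw [add_mulVec, Pi.add_apply, pathAdj_mulVec_apply (fun k : ℕ => sin ((k + 1) * θ)),
    pathAdj_transpose_mulVec_apply (fun k : ℕ => sin ((k + 1) * θ))]
  have hnext : (if (i : ℕ) + 1 < n then sin ((((i : ℕ) + 1 : ℕ) + 1) * θ) else 0) =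
      sin ((i + 1) * θ + θ) := by
    have hsucc : ((i + 1 : ℕ) + 1 : ℝ) * θ = (i + 1) * θ + θ := by push_cast; ring
    split_ifs with h
    · rw [hsucc]
    · rw [← hsucc, show (i : ℕ) + 1 = n by omega, hθ]
  have hprev : (if 0 < (i : ℕ) then sin ((((i : ℕ) - 1 : ℕ) + 1) * θ) else 0) =
      sin ((i + 1) * θ - θ) := by
    split_ifs with h
    · congr 1; rw [Nat.cast_sub (by omega)]; push_cast; ring
    · simp [show (i : ℕ) = 0 by omega]
  rw [hnext, hprev, Pi.smul_apply, smul_eq_mul, sin_add, sin_sub]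
  ring

noncomputable def sineAngle (n j : ℕ) : ℝ :=
  (j + 1) * π / (n + 1)

noncomputable def sineMatrix (n : ℕ) : Matrix (Fin n) (Fin n) ℝ :=
  of fun k j => sin ((k + 1) * sineAngle n j)

theorem sin_succ_mul_sineAngle (j : ℕ) : sin ((n + 1) * sineAngle n j) = 0 := by
  rw [sineAngle, mul_div_cancel₀ _ (by positivity)]
  exact_mod_cast sin_nat_mul_pi (j + 1)

theorem sineAngle_mem_Ioo (j : Fin n) : sineAngle n j ∈ Set.Ioo 0 π := by
  have hj : (j : ℝ) + 1 < n + 1 := by exact_mod_cast Nat.add_lt_add_right j.isLt 1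
  refine ⟨by unfold sineAngle; positivity, ?_⟩
  rw [sineAngle, div_lt_iff₀ (by positivity)]
  nlinarith [pi_pos]

theorem cos_sineAngle_injective : Function.Injective fun j : Fin n => cos (sineAngle n j) := by
  intro i j h
  have := injOn_cos (Set.Ioo_subset_Icc_self (sineAngle_mem_Ioo i))
    (Set.Ioo_subset_Icc_self (sineAngle_mem_Ioo j)) h
  rw [sineAngle, sineAngle, div_left_inj' (by positivity), mul_left_inj' pi_ne_zero] at this
  exact Fin.ext (by exact_mod_cast add_right_cancel this)

theorem isUnit_sineMatrix : IsUnit (sineMatrix n) := by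
  refine linearIndependent_cols_iff_isUnit.1 <| Module.End.eigenvectors_linearIndependent'
    (toLin' (pathAdj n + (pathAdj n)ᵀ)) _
    ((mul_right_injective₀ two_ne_zero).comp cos_sineAngle_injective) _ fun j => ⟨?_, ?_⟩
  · rw [Module.End.mem_genEigenspace_one, toLin'_apply]
    exact pathAdj_add_transpose_mulVec_sin (sin_succ_mul_sineAngle j)
  · intro h
    have h0 := congr_fun h ⟨0, j.pos⟩
    simp only [col_apply, sineMatrix, of_apply, Pi.zero_apply, Nat.cast_zero, zero_add,
      one_mul] at h0
    exact (sin_pos_of_pos_of_lt_pi (sineAngle_mem_Ioo j).1 (sineAngle_mem_Ioo j).2).ne' h0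

theorem tridiagonal_mul_sineMatrix (a b : ℝ) :
    (a • 1 + b • (pathAdj n + (pathAdj n)ᵀ)) * sineMatrix n =
      sineMatrix n * diagonal fun j : Fin n => a + 2 * b * cos (sineAngle n j) := by
  ext k j
  have hcol := congr_fun (pathAdj_add_transpose_mulVec_sin (sin_succ_mul_sineAngle (n := n) j)) k
  change ((a • 1 + b • (pathAdj n + (pathAdj n)ᵀ)) *ᵥ fun l => sineMatrix n l j) k = _
  rw [add_mulVec, smul_mulVec, smul_mulVec, one_mulVec, Pi.add_apply, Pi.smul_apply,
    Pi.smul_apply, mul_diagonal]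
  simp only [sineMatrix, of_apply, Pi.smul_apply, smul_eq_mul] at hcol ⊢
  rw [hcol]
  ring

theorem charpoly_tridiagonal (a b : ℝ) :
    (a • 1 + b • (pathAdj n + (pathAdj n)ᵀ)).charpoly =
      ∏ j ∈ Finset.range n, (X - C (a + 2 * b * cos (sineAngle n j))) := by
  rw [charpoly_eq_prod_of_mul_eq_mul_diagonal isUnit_sineMatrix (tridiagonal_mul_sineMatrix a b),
    Fin.prod_univ_eq_prod_range (fun j : ℕ => X - C (a + 2 * b * cos (sineAngle n j)))]

end Tridiagonal

section Path

variable {n : ℕ}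

theorem pathOut_mul_pathOut : pathOut n * pathOut n = pathOut n := by
  rw [pathOut, diagonal_mul_diagonal]
  congr 1
  ext i
  split_ifs <;> norm_num

theorem pathOut_mul_pathAdj : pathOut n * pathAdj n = pathAdj n := by
  ext i j
  simp only [pathOut, diagonal_mul, pathAdj, of_apply, ite_mul, one_mul, zero_mul]
  have := j.isLt
  split_ifs <;> first | rfl | omega

theorem pathAdj_mul_transpose : pathAdj n * (pathAdj n)ᵀ = pathOut n := by
  ext i j
  refine (pathAdj_mulVec_apply (fun l : ℕ => if l = (j : ℕ) + 1 then (1 : ℝ) else 0) i).trans ?_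
  simp only [pathOut, diagonal_apply, Fin.ext_iff]
  split_ifs <;> first | rfl | omega

theorem transpose_pathOut : (pathOut n)ᵀ = pathOut n :=
  diagonal_transpose _

theorem pathAdj_transpose_mul_pathOut : (pathAdj n)ᵀ * pathOut n = (pathAdj n)ᵀ := by
  rw [← transpose_pathOut, ← transpose_mul, pathOut_mul_pathAdj]

theorem pathGram_eq (α : ℝ) :
    (α • pathOut n + (1 - α) • pathAdj n) * (α • pathOut n + (1 - α) • pathAdj n)ᵀ =
      pathOut n * ((α ^ 2 + (1 - α) ^ 2) • 1 + (α * (1 - α)) • (pathAdj n + (pathAdj n)ᵀ)) *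
        pathOut n := by
  have hENE : pathOut n * (pathAdj n)ᵀ * pathOut n = pathOut n * (pathAdj n)ᵀ := by
    rw [Matrix.mul_assoc, pathAdj_transpose_mul_pathOut]
  simp only [transpose_add, transpose_smul, transpose_pathOut, Matrix.add_mul, Matrix.mul_add,
    Matrix.smul_mul, Matrix.mul_smul, Matrix.mul_one, pathOut_mul_pathOut, pathOut_mul_pathAdj,
    pathAdj_mul_transpose, hENE]
  module

end Path

section Truncation

variable {m : ℕ}

theorem pathOut_mul_mul_pathOut_apply_last (T : Matrix (Fin (m + 1)) (Fin (m + 1)) ℝ)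
    (j : Fin (m + 1)) : (pathOut (m + 1) * T * pathOut (m + 1)) (Fin.last m) j = 0 := by
  simp [pathOut, mul_diagonal, diagonal_mul]

theorem submatrix_castSucc_pathOut_mul_mul_pathOut (T : Matrix (Fin (m + 1)) (Fin (m + 1)) ℝ) :
    (pathOut (m + 1) * T * pathOut (m + 1)).submatrix Fin.castSucc Fin.castSucc =
      T.submatrix Fin.castSucc Fin.castSucc := by
  ext i j
  simp [pathOut, mul_diagonal, diagonal_mul]

theorem submatrix_castSucc_tridiagonal (a b : ℝ) :
    (a • 1 + b • (pathAdj (m + 1) + (pathAdj (m + 1))ᵀ)).submatrix Fin.castSucc Fin.castSucc =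
      a • 1 + b • (pathAdj m + (pathAdj m)ᵀ) := by
  ext i j
  simp [pathAdj, one_apply]

theorem charpoly_pathGram (α : ℝ) :
    ((α • pathOut (m + 1) + (1 - α) • pathAdj (m + 1)) *
        (α • pathOut (m + 1) + (1 - α) • pathAdj (m + 1))ᵀ).charpoly =
      X * ∏ j ∈ Finset.range m,
        (X - C (α ^ 2 + (1 - α) ^ 2 + 2 * (α * (1 - α)) * cos (sineAngle m j))) := by
  rw [pathGram_eq, charpoly_eq_X_mul_of_row_last_eq_zero _ (pathOut_mul_mul_pathOut_apply_last _),
    submatrix_castSucc_pathOut_mul_mul_pathOut, submatrix_castSucc_tridiagonal,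
    charpoly_tridiagonal]

end Truncation

theorem stmt_0_general (n : ℕ) (hn : 0 < n) (α : ℝ) :
    ((((α • pathOut n + (1 - α) • pathAdj n) *
        (α • pathOut n + (1 - α) • pathAdj n)ᵀ).charpoly.roots).map Real.sqrt) =
      (0 : ℝ) ::ₘ (Multiset.range (n - 1)).map
        (fun j => Real.sqrt (2 * α ^ 2 - 2 * α + 1 +
          2 * α * (1 - α) * Real.cos (((j : ℝ) + 1) * Real.pi / n))) := by
  obtain ⟨m, rfl⟩ : ∃ m, n = m + 1 := ⟨n - 1, by omega⟩
  rw [charpoly_pathGram, roots_X_mul_prod_X_sub_C, Multiset.map_cons, sqrt_zero,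
    Nat.add_sub_cancel, Finset.range_val, Multiset.map_map]
  congr 1
  simp only [Multiset.pure_def, Multiset.bind_def, Multiset.bind_singleton, Multiset.map_map]
  refine Multiset.map_congr rfl fun j _ => ?_
  simp only [Function.comp_apply, sineAngle, Nat.cast_succ]
  congr 1
  ring

/-- The singular values of `A_α(P⃗_n)`, i.e. the square roots of the eigenvalues of
`A_α A_αᵀ`, are `0` (once) and `√(2α²-2α+1+2α(1-α)cos(jπ/n))` for `j = 1,…,n-1`. -/
theorem stmt_0 (n : ℕ) (hn : 0 < n) (α : ℝ) (hα0 : 0 ≤ α) (hα1 : α < 1) :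
    ((((α • pathOut n + (1 - α) • pathAdj n) *
        (α • pathOut n + (1 - α) • pathAdj n)ᵀ).charpoly.roots).map Real.sqrt) =
      (0 : ℝ) ::ₘ (Multiset.range (n - 1)).map
        (fun j => Real.sqrt (2 * α ^ 2 - 2 * α + 1 +
          2 * α * (1 - α) * Real.cos (((j : ℝ) + 1) * Real.pi / n))) :=
  stmt_0_general n hn α
end

section
/- The singular values of A_α(K⃗_{r,s}) are 0 with multiplicity s, αs with multiplicity r-1, and √(α²s² + (1-α)² s r) with multiplicity 1. -/
/-!
`A_α A_αᵀ` is block diagonal with blocks `α²s² I_r + (1-α)² s J_r` and `0_s`. The rank-one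
matrix `c J_r` has characteristic polynomial `X^(r-1) (X - r c)`, and adding `a I_r` shifts
every eigenvalue by `a`; so the eigenvalues are `α²s²` (`r-1` times),
`α²s² + (1-α)² s r` (once) and `0` (`s` times).
-/

open Matrix Real

/-- The `A_α` matrix of the oriented complete bipartite graph `K⃗_{r,s}`: block matrix with
top-left block `αs I_r`, top-right block `(1-α) J_{r×s}`, and zero elsewhere. -/
noncomputable def KrsAlpha (r s : ℕ) (α : ℝ) :
    Matrix (Fin r ⊕ Fin s) (Fin r ⊕ Fin s) ℝ :=
  Matrix.fromBlocks ((α * s) • (1 : Matrix (Fin r) (Fin r) ℝ))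
    ((1 - α) • Matrix.of (fun _ _ => (1 : ℝ))) 0 0

open Polynomial

namespace Matrix

variable {n m R : Type*} [Fintype n] [Fintype m] [CommRing R]

theorem charpoly_add_smul_one [DecidableEq n] (M : Matrix n n R) (a : R) :
    (M + a • 1).charpoly = M.charpoly.comp (X - C a) := by
  have hM : M + a • 1 = M - scalar n (-a) := by
    rw [scalar_apply, ← smul_one_eq_diagonal, neg_smul, sub_neg_eq_add]
  rw [hM, charpoly_sub_scalar, C_neg, ← sub_eq_add_neg]

theorem charpoly_of_const [DecidableEq n] [Nonempty n] (b : R) :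
    (of fun _ _ : n => b).charpoly = X ^ (Fintype.card n - 1) * (X - C (Fintype.card n * b)) := by
  have hJ : (of fun _ _ : n => b) = vecMulVec (fun _ => b) (fun _ => 1) := by
    ext; simp [vecMulVec_apply]
  have h : 1 ≤ Fintype.card n := Fintype.card_pos
  rw [hJ, charpoly_vecMulVec, mul_sub, ← pow_succ, Nat.sub_add_cancel h, smul_eq_C_mul]
  simp [dotProduct, mul_comm]

theorem charpoly_smul_one_add_of_const [DecidableEq n] [Nonempty n] (a b : R) :
    (a • 1 + of fun _ _ : n => b).charpoly =
      (X - C a) ^ (Fintype.card n - 1) * (X - C (a + Fintype.card n * b)) := by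
  rw [add_comm, charpoly_add_smul_one, charpoly_of_const]
  simp only [mul_comp, X_pow_comp, sub_comp, X_comp, C_comp, C_add]
  ring

theorem roots_charpoly_smul_one_add_of_const [IsDomain R] [DecidableEq n] [Nonempty n] (a b : R) :
    (a • 1 + of fun _ _ : n => b).charpoly.roots =
      Multiset.replicate (Fintype.card n - 1) a + {a + Fintype.card n * b} := by
  rw [charpoly_smul_one_add_of_const, roots_mul, roots_pow, roots_X_sub_C, roots_X_sub_C,
    Multiset.nsmul_singleton]
  exact (((monic_X_sub_C a).pow _).mul (monic_X_sub_C _)).ne_zero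

theorem fromBlocks_zero_zero_mul_transpose (A : Matrix m m R) (B : Matrix m n R) :
    fromBlocks A B (0 : Matrix n m R) 0 * (fromBlocks A B (0 : Matrix n m R) 0)ᵀ =
      fromBlocks (A * Aᵀ + B * Bᵀ) 0 0 0 := by
  simp [fromBlocks_transpose, fromBlocks_multiply]

theorem roots_charpoly_fromBlocks_zero [IsDomain R] [DecidableEq m] [DecidableEq n]
    (A : Matrix m m R) :
    (fromBlocks A 0 0 (0 : Matrix n n R)).charpoly.roots =
      A.charpoly.roots + Multiset.replicate (Fintype.card n) 0 := by
  rw [charpoly_fromBlocks_zero₂₁, charpoly_zero, roots_mul, roots_X_pow, Multiset.nsmul_singleton]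
  exact ((charpoly_monic A).mul (monic_X_pow _)).ne_zero

end Matrix

theorem KrsAlpha_mul_transpose (r s : ℕ) (α : ℝ) :
    KrsAlpha r s α * (KrsAlpha r s α)ᵀ =
      fromBlocks ((α * s) ^ 2 • 1 + of fun _ _ => (1 - α) ^ 2 * s) 0 0 0 := by
  rw [KrsAlpha, fromBlocks_zero_zero_mul_transpose]
  congr 1
  ext i j
  by_cases h : i = j <;> simp [mul_apply, one_apply, h] <;> ring

theorem stmt_4_general (r s : ℕ) (hr : 0 < r) (α : ℝ) (hα0 : 0 ≤ α) :
    (((KrsAlpha r s α * (KrsAlpha r s α)ᵀ).charpoly.roots).map Real.sqrt) =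
      Multiset.replicate s (0 : ℝ) + Multiset.replicate (r - 1) (α * s) +
        {Real.sqrt (α ^ 2 * s ^ 2 + (1 - α) ^ 2 * s * r)} := by
  have : Nonempty (Fin r) := Fin.pos_iff_nonempty.mp hr
  rw [KrsAlpha_mul_transpose, roots_charpoly_fromBlocks_zero,
    roots_charpoly_smul_one_add_of_const]
  simp only [Multiset.map_add, Multiset.map_replicate, Multiset.map_singleton, Fintype.card_fin,
    Real.sqrt_zero, Real.sqrt_sq (by positivity : 0 ≤ α * s)]
  rw [add_comm, ← add_assoc]
  congr 3
  ring

/-- The singular values of `A_α(K⃗_{r,s})`, i.e. the square roots of the eigenvalues of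
`A_α A_αᵀ`, are `0` with multiplicity `s`, `αs` with multiplicity `r-1`, and
`√(α²s² + (1-α)²sr)` with multiplicity `1`. -/
theorem stmt_4 (r s : ℕ) (hr : 0 < r) (hs : 0 < s) (α : ℝ) (hα0 : 0 ≤ α) (hα1 : α < 1) :
    (((KrsAlpha r s α * (KrsAlpha r s α)ᵀ).charpoly.roots).map Real.sqrt) =
      Multiset.replicate s (0 : ℝ) + Multiset.replicate (r - 1) (α * s) +
        {Real.sqrt (α ^ 2 * s ^ 2 + (1 - α) ^ 2 * s * r)} :=
  stmt_4_general r s hr α hα0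
end

section
/- The eigenvalues of A_α(K⃗_{r,s}) A_α(K⃗_{r,s})ᵀ are 0 with multiplicity s, α²s² with multiplicity r-1, and α²s² + (1-α)² s r with multiplicity 1. -/
open Matrix Real Polynomial

lemma eval_charpoly_aux {n : Type*} [Fintype n] [DecidableEq n] (M : Matrix n n ℝ) (x : ℝ) :
    (M.charpoly).eval x = (x • (1 : Matrix n n ℝ) - M).det := by
  rw [Matrix.charpoly, show (Polynomial.eval x : ℝ[X] → ℝ) = (Polynomial.evalRingHom x : ℝ[X] →+* ℝ) from rfl,
    RingHom.map_det]
  congr 1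
  ext i j
  by_cases h : i = j <;>
    simp [h, Matrix.charmatrix_apply, Matrix.one_apply, Matrix.diagonal_apply]

/-- The eigenvalues of `A_α(K⃗_{r,s}) A_α(K⃗_{r,s})ᵀ` are `0` with multiplicity `s`,
`α²s²` with multiplicity `r-1`, and `α²s² + (1-α)²sr` with multiplicity `1`. -/
theorem stmt_5 (r s : ℕ) (hr : 0 < r) (hs : 0 < s) (α : ℝ) (hα0 : 0 ≤ α) (hα1 : α < 1) :
    ((KrsAlpha r s α * (KrsAlpha r s α)ᵀ).charpoly.roots) =
      Multiset.replicate s (0 : ℝ) + Multiset.replicate (r - 1) (α ^ 2 * s ^ 2) +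
        {α ^ 2 * s ^ 2 + (1 - α) ^ 2 * s * r} := by
  set a : ℝ := α ^ 2 * s ^ 2 with ha
  set b : ℝ := (1 - α) ^ 2 * s with hb
  set B : Matrix (Fin r) (Fin r) ℝ :=
    a • 1 + b • Matrix.of (fun _ _ => (1 : ℝ)) with hB
  have hM : KrsAlpha r s α * (KrsAlpha r s α)ᵀ =
      Matrix.fromBlocks B 0 0 (0 : Matrix (Fin s) (Fin s) ℝ) := by
    ext (i | i) (j | j) <;>
      simp [KrsAlpha, hB, Matrix.mul_apply, Fintype.sum_sum_type, Matrix.one_apply,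
        Finset.mul_sum, Finset.sum_ite_eq, Finset.sum_ite_eq'] <;>
      by_cases h : i = j <;>
      simp [h, Finset.sum_ite_eq, ha, hb] <;> ring
  have hBcp : B.charpoly = (X - C a) ^ (r - 1) * (X - C (a + b * r)) := by
    apply Polynomial.eq_of_infinite_eval_eq
    refine ((Set.finite_singleton a).infinite_compl).mono ?_
    intro x hx
    have hxa : x - a ≠ 0 := sub_ne_zero.mpr hx
    simp only [Set.mem_setOf_eq]
    rw [eval_charpoly_aux]
    have hfac : x • (1 : Matrix (Fin r) (Fin r) ℝ) - B =
        (x - a) • (1 + Matrix.replicateCol Unit (fun _ => -b / (x - a)) * Matrix.replicateRow Unit (fun _ => (1 : ℝ))) := by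
      ext i j
      by_cases h : i = j <;>
        simp [hB, Matrix.one_apply, h, Matrix.mul_apply] <;>
        field_simp <;> ring
    rw [hfac, Matrix.det_smul, Matrix.det_one_add_replicateCol_mul_replicateRow]
    simp only [dotProduct, Finset.sum_const, Finset.card_univ, Fintype.card_fin,
      nsmul_eq_mul, one_mul, eval_mul, eval_pow, eval_sub, eval_X, eval_C, smul_eq_mul]
    have hr' : r = (r - 1) + 1 := (Nat.succ_pred_eq_of_pos hr).symm
    rw [hr', pow_succ]
    rw [Nat.add_sub_cancel]
    field_simp
    ring
  have hZ : (0 : Matrix (Fin s) (Fin s) ℝ).charpoly = X ^ s := by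
    apply Polynomial.eq_of_infinite_eval_eq
    refine Set.infinite_univ.mono ?_
    intro x _
    simp [eval_charpoly_aux, Matrix.det_smul]
  rw [hM, Matrix.charpoly_fromBlocks_zero₂₁, hBcp, hZ]
  have h1 : ((X - C a) ^ (r - 1) : ℝ[X]) ≠ 0 := ((monic_X_sub_C a).pow _).ne_zero
  have h2 : ((X - C (a + b * r)) : ℝ[X]) ≠ 0 := (monic_X_sub_C _).ne_zero
  have h3 : ((X : ℝ[X]) ^ s) ≠ 0 := (monic_X.pow _).ne_zero
  rw [Polynomial.roots_mul (mul_ne_zero (mul_ne_zero h1 h2) h3),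
    Polynomial.roots_mul (mul_ne_zero h1 h2), Polynomial.roots_pow, Polynomial.roots_pow,
    Polynomial.roots_X_sub_C, Polynomial.roots_X_sub_C, Polynomial.roots_X]
  simp only [Multiset.nsmul_singleton]
  have : a + b * r = α ^ 2 * s ^ 2 + (1 - α) ^ 2 * s * r := by rw [ha, hb]
  rw [this, ha]
  abel
end

section
/- If D is a digraph with n ≥ 2 vertices and a arcs, then its largest singular value σ_{1α}(D) of A_α(D) satisfies σ_{1α}(D) ≥ a/n, with equality if and only if D is (a/n)-regular (all indegrees and outdegrees equal a/n). -/
open Matrix Real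

/-- Adjacency matrix (over ℝ) of a digraph given by an arc relation on `Fin n`. -/
def adjMat {n : ℕ} (R : Fin n → Fin n → Prop) [DecidableRel R] :
    Matrix (Fin n) (Fin n) ℝ :=
  Matrix.of fun i j => if R i j then 1 else 0

def outdeg {n : ℕ} (R : Fin n → Fin n → Prop) [DecidableRel R] (i : Fin n) : ℕ :=
  (Finset.univ.filter fun j => R i j).card

def indeg {n : ℕ} (R : Fin n → Fin n → Prop) [DecidableRel R] (j : Fin n) : ℕ :=
  (Finset.univ.filter fun i => R i j).card

/-- The `A_α` matrix of a digraph: `α Δ⁺ + (1-α) A`. -/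
noncomputable def Amat {n : ℕ} (α : ℝ) (R : Fin n → Fin n → Prop) [DecidableRel R] :
    Matrix (Fin n) (Fin n) ℝ :=
  α • Matrix.diagonal (fun i => (outdeg R i : ℝ)) + (1 - α) • adjMat R

/-- The singular values of a real square matrix `M`: the nonnegative square roots of the
eigenvalues of `M Mᵀ` (`Mᴴ = Mᵀ` over ℝ). -/
noncomputable def singVals {m : Type*} [Fintype m] [DecidableEq m]
    (M : Matrix m m ℝ) (i : m) : ℝ :=
  Real.sqrt ((Matrix.isHermitian_mul_conjTranspose_self M).eigenvalues i)

noncomputable def traceNorm {m : Type*} [Fintype m] [DecidableEq m]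
    (M : Matrix m m ℝ) : ℝ :=
  ∑ i, singVals M i

/-- Spectral norm: the largest singular value. -/
noncomputable def specNorm {m : Type*} [Fintype m] [DecidableEq m]
    (M : Matrix m m ℝ) : ℝ :=
  ⨆ i, singVals M i

open scoped Matrix.Norms.L2Operator ENNReal

/-!
`σ_{1α}(D)` is the `ℓ²` operator norm of `A_α`: the eigenvalues of the positive semidefinite
matrix `A_α A_αᵀ` are its spectrum, whose spectral radius is `‖A_α A_αᵀ‖ = ‖A_α‖²`.
Applying `A_α` and `A_αᵀ` to the all-ones vector bounds the sum of squares of the row sums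
(the outdegrees) and of the column sums (`α d⁺ + (1 - α) d⁻`) by `n ‖A_α‖²`. Both families sum
to `a`, so Cauchy–Schwarz gives `a / n ≤ ‖A_α‖`, and equality forces both to be constant.
Conversely, if `D` is `(a/n)`-regular then `(n/a) A_α` is doubly stochastic, hence of norm at
most `1` by Birkhoff's theorem.
-/

theorem Matrix.IsHermitian.l2_opNorm_eq_iSup_abs_eigenvalues {𝕜 n : Type*} [RCLike 𝕜]
    [Fintype n] [DecidableEq n] {S : Matrix n n 𝕜} (hS : S.IsHermitian) :
    ‖S‖ = ⨆ i, |hS.eigenvalues i| := by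
  have hT : IsSelfAdjoint (toEuclideanCLM (𝕜 := 𝕜) S) := hS.isSelfAdjoint.map _
  have hS' : (‖S‖₊ : ℝ≥0∞) = ⨆ i, (‖hS.eigenvalues i‖₊ : ℝ≥0∞) := by
    change (‖toEuclideanCLM (𝕜 := 𝕜) S‖₊ : ℝ≥0∞) = _
    rw [← ContinuousLinearMap.spectralRadius_eq_nnnorm _ hT, spectralRadius,
      AlgEquiv.spectrum_eq, hS.spectrum_eq_image_range, iSup_image, iSup_range]
    simp
  rw [← ENNReal.coe_iSup (Set.finite_range _).bddAbove, ENNReal.coe_inj] at hS'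
  simpa using congrArg NNReal.toReal hS'

theorem specNorm_eq_l2_opNorm {m : Type*} [Fintype m] [DecidableEq m] (M : Matrix m m ℝ) :
    specNorm M = ‖M‖ := by
  set hS := isHermitian_mul_conjTranspose_self M
  have hnorm : ‖M‖ ^ 2 = ⨆ i, hS.eigenvalues i := by
    have := l2_opNorm_conjTranspose_mul_self Mᴴ
    rw [conjTranspose_conjTranspose, l2_opNorm_conjTranspose,
      hS.l2_opNorm_eq_iSup_abs_eigenvalues] at this
    simp_rw [abs_of_nonneg (eigenvalues_self_mul_conjTranspose_nonneg M _)] at this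
    rw [sq, ← this]
  have hbdd : BddAbove (Set.range (singVals M)) := (Set.finite_range _).bddAbove
  have hspec0 : 0 ≤ specNorm M := Real.iSup_nonneg fun i => Real.sqrt_nonneg _
  refine le_antisymm (Real.iSup_le (fun i => ?_) (norm_nonneg _)) ?_
  · rw [singVals, Real.sqrt_le_left (norm_nonneg _), hnorm]
    exact le_ciSup (Set.finite_range _).bddAbove i
  · refine (pow_le_pow_iff_left₀ (norm_nonneg _) hspec0 two_ne_zero).mp ?_
    rw [hnorm]
    refine Real.iSup_le (fun i => ?_) (sq_nonneg _)
    rw [← Real.sq_sqrt (eigenvalues_self_mul_conjTranspose_nonneg M i)]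
    exact pow_le_pow_left₀ (Real.sqrt_nonneg _) (le_ciSup hbdd i) 2

theorem Matrix.sum_sq_sum_row_le {m n : Type*} [Fintype m] [Fintype n] [DecidableEq n]
    (M : Matrix m n ℝ) : ∑ i, (∑ j, M i j) ^ 2 ≤ ‖M‖ ^ 2 * Fintype.card n := by
  have h := l2_opNorm_mulVec M (WithLp.toLp 2 (fun _ => 1))
  have h2 := pow_le_pow_left₀ (norm_nonneg _) h 2
  rw [mul_pow, EuclideanSpace.real_norm_sq_eq, EuclideanSpace.real_norm_sq_eq] at h2
  simpa [mulVec, dotProduct] using h2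

theorem Matrix.sum_sq_sum_col_le {m n : Type*} [Fintype m] [Fintype n] [DecidableEq m]
    [DecidableEq n]
    (M : Matrix m n ℝ) : ∑ j, (∑ i, M i j) ^ 2 ≤ ‖M‖ ^ 2 * Fintype.card m := by
  simpa [← conjTranspose_eq_transpose_of_trivial, l2_opNorm_conjTranspose] using
    Mᵀ.sum_sq_sum_row_le

theorem Matrix.l2_opNorm_le_of_sum_row_eq_of_sum_col_eq {n : Type*} [Fintype n] [DecidableEq n]
    {M : Matrix n n ℝ} {r : ℝ} (hr : 0 ≤ r) (hM : ∀ i j, 0 ≤ M i j)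
    (hrow : ∀ i, ∑ j, M i j = r) (hcol : ∀ j, ∑ i, M i j = r) : ‖M‖ ≤ r := by
  rcases hr.eq_or_lt with rfl | hr
  · have : M = 0 := by
      ext i j
      exact (Finset.sum_eq_zero_iff_of_nonneg fun j _ => hM i j).mp (hrow i) j (Finset.mem_univ _)
    simp [this]
  · have hds : r⁻¹ • M ∈ doublyStochastic ℝ n := by
      rw [mem_doublyStochastic_iff_sum]
      refine ⟨fun i j => ?_, fun i => ?_, fun j => ?_⟩
      · simpa using mul_nonneg (inv_nonneg.mpr hr.le) (hM i j)
      · simp [← Finset.mul_sum, hrow i, hr.ne']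
      · simp [← Finset.mul_sum, hcol j, hr.ne']
    have := l2_opNorm_le_one_of_mem_doublyStochastic hds
    rwa [norm_smul, Real.norm_eq_abs, abs_inv, abs_of_pos hr, inv_mul_le_iff₀ hr, mul_one] at this

section SumOfSquares

variable {ι : Type*} [Fintype ι] {f : ι → ℝ} {r : ℝ}

theorem sum_sq_sub_eq_of_sum_eq (hsum : ∑ i, f i = Fintype.card ι * r) :
    ∑ i, (f i - r) ^ 2 = ∑ i, f i ^ 2 - Fintype.card ι * r ^ 2 := by
  simp only [sub_sq, Finset.sum_add_distrib, Finset.sum_sub_distrib, ← Finset.sum_mul,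
    Finset.sum_const, Finset.card_univ, nsmul_eq_mul]
  rw [← Finset.mul_sum, hsum]
  ring

theorem le_of_sum_eq_of_sum_sq_le [Nonempty ι] {σ : ℝ} (hσ : 0 ≤ σ)
    (hsum : ∑ i, f i = Fintype.card ι * r) (hsq : ∑ i, f i ^ 2 ≤ σ ^ 2 * Fintype.card ι) :
    r ≤ σ := by
  have hvar := sum_sq_sub_eq_of_sum_eq hsum
  have hN : (0 : ℝ) < Fintype.card ι := by exact_mod_cast Fintype.card_pos
  have hr2 : r ^ 2 ≤ σ ^ 2 := by
    refine le_of_mul_le_mul_left ?_ hN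
    nlinarith [Finset.sum_nonneg fun i (_ : i ∈ Finset.univ) => sq_nonneg (f i - r)]
  exact (le_abs_self r).trans (abs_le_of_sq_le_sq hr2 hσ)

theorem eq_of_sum_eq_of_sum_sq_le (hsum : ∑ i, f i = Fintype.card ι * r)
    (hsq : ∑ i, f i ^ 2 ≤ r ^ 2 * Fintype.card ι) (i : ι) : f i = r := by
  have hzero : ∑ j, (f j - r) ^ 2 = 0 := by
    refine le_antisymm ?_ (Finset.sum_nonneg fun j _ => sq_nonneg _)
    rw [sum_sq_sub_eq_of_sum_eq hsum]
    linarith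
  have := (Finset.sum_eq_zero_iff_of_nonneg fun j _ => sq_nonneg (f j - r)).mp hzero i
    (Finset.mem_univ _)
  exact sub_eq_zero.mp (pow_eq_zero_iff two_ne_zero |>.mp this)

end SumOfSquares

section Digraph

variable {n : ℕ} (α : ℝ) (R : Fin n → Fin n → Prop) [DecidableRel R]

theorem Amat_apply (i j : Fin n) :
    Amat α R i j =
      α * (if i = j then (outdeg R i : ℝ) else 0) + (1 - α) * (if R i j then 1 else 0) := by
  simp [Amat, adjMat, diagonal_apply]

theorem Amat_nonneg (hα0 : 0 ≤ α) (hα1 : α ≤ 1) (i j : Fin n) : 0 ≤ Amat α R i j := by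
  rw [Amat_apply]
  have h1α : 0 ≤ 1 - α := sub_nonneg.mpr hα1
  split_ifs <;> positivity

theorem sum_Amat_row (i : Fin n) : ∑ j, Amat α R i j = outdeg R i := by
  simp only [Amat_apply, Finset.sum_add_distrib, ← Finset.mul_sum, Finset.sum_ite_eq,
    Finset.sum_boole, Finset.mem_univ, if_true, outdeg]
  ring

theorem sum_Amat_col (j : Fin n) :
    ∑ i, Amat α R i j = α * outdeg R j + (1 - α) * indeg R j := by
  simp only [Amat_apply, Finset.sum_add_distrib, ← Finset.mul_sum, Finset.sum_ite_eq',
    Finset.sum_boole, Finset.mem_univ, if_true, indeg]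

theorem sum_indeg_eq_sum_outdeg : ∑ j, indeg R j = ∑ i, outdeg R i := by
  simp only [indeg, outdeg, Finset.card_filter]
  exact Finset.sum_comm

end Digraph

theorem stmt_10_general (n : ℕ) (hn : 2 ≤ n) (R : Fin n → Fin n → Prop) [DecidableRel R]
    (α : ℝ) (hα0 : 0 ≤ α) (hα1 : α < 1)
    (a : ℕ) (ha : a = ∑ i, outdeg R i) :
    (a : ℝ) / n ≤ specNorm (Amat α R) ∧
      (specNorm (Amat α R) = (a : ℝ) / n ↔
        ∀ i, (outdeg R i : ℝ) = (a : ℝ) / n ∧ (indeg R i : ℝ) = (a : ℝ) / n) := by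
  have : Nonempty (Fin n) := ⟨⟨0, by omega⟩⟩
  set r : ℝ := (a : ℝ) / n
  set c : Fin n → ℝ := fun j => α * outdeg R j + (1 - α) * indeg R j
  have hsum_out : ∑ i, (outdeg R i : ℝ) = Fintype.card (Fin n) * r := by
    rw [Fintype.card_fin, mul_div_cancel₀ _ (by positivity), ha, Nat.cast_sum]
  have hsum_c : ∑ j, c j = Fintype.card (Fin n) * r := by
    have hin : ∑ j, (indeg R j : ℝ) = ∑ i, (outdeg R i : ℝ) := by
      exact_mod_cast sum_indeg_eq_sum_outdeg R
    rw [Finset.sum_add_distrib, ← Finset.mul_sum, ← Finset.mul_sum, hin, hsum_out]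
    ring
  have hrow := (Amat α R).sum_sq_sum_row_le
  have hcol := (Amat α R).sum_sq_sum_col_le
  simp only [sum_Amat_row, sum_Amat_col] at hrow hcol
  rw [specNorm_eq_l2_opNorm]
  have hlow : r ≤ ‖Amat α R‖ := le_of_sum_eq_of_sum_sq_le (norm_nonneg _) hsum_c hcol
  refine ⟨hlow, fun h i => ?_, fun hreg => ?_⟩
  · rw [h] at hrow hcol
    have hout := eq_of_sum_eq_of_sum_sq_le hsum_out hrow i
    have hc := eq_of_sum_eq_of_sum_sq_le hsum_c hcol i
    simp only [c, hout] at hc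
    exact ⟨hout, mul_left_cancel₀ (sub_pos.mpr hα1).ne' (by linarith)⟩
  · refine le_antisymm (l2_opNorm_le_of_sum_row_eq_of_sum_col_eq (by positivity)
      (Amat_nonneg α R hα0 hα1.le) (fun i => ?_) (fun j => ?_)) hlow
    · rw [sum_Amat_row, (hreg i).1]
    · rw [sum_Amat_col, (hreg j).1, (hreg j).2]
      ring

/-- For a digraph `D` with `n ≥ 2` vertices and `a` arcs, `σ_{1α}(D) ≥ a/n`, with equality
iff `D` is `a/n`-regular (all outdegrees and indegrees equal `a/n`). -/
theorem stmt_10 (n : ℕ) (hn : 2 ≤ n) (R : Fin n → Fin n → Prop) [DecidableRel R]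
    (hirr : ∀ i, ¬ R i i) (α : ℝ) (hα0 : 0 ≤ α) (hα1 : α < 1)
    (a : ℕ) (ha : a = ∑ i, outdeg R i) :
    (a : ℝ) / n ≤ specNorm (Amat α R) ∧
      (specNorm (Amat α R) = (a : ℝ) / n ↔
        ∀ i, (outdeg R i : ℝ) = (a : ℝ) / n ∧ (indeg R i : ℝ) = (a : ℝ) / n) :=
  stmt_10_general n hn R α hα0 hα1 a ha
end

section
/- If D is a digraph with n ≥ 2 vertices and a arcs, then the trace norm of A_α(D) satisfies ‖D_α‖_* ≥ √((1-α)² a + α² Σ_{i=1}^n (d_i⁺)² + n(n-1)|det A_α|^{2/n}). -/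
open Matrix Real

/-!
With `σᵢ` the singular values of `A_α`, `‖D_α‖_*² = Σ σᵢ² + Σ_{i ≠ j} σᵢ σⱼ`. The first sum is
`tr (A_α A_αᵀ)`, the sum of the squared entries, which is `(1-α)² a + α² Σ (dᵢ⁺)²` because a loopless
digraph has its arcs off the diagonal. The second sum has `n(n-1)` terms whose product is
`(Π σᵢ)^{2(n-1)} = |det A_α|^{2(n-1)}`, so AM–GM bounds it below by `n(n-1) |det A_α|^{2/n}`.
-/

namespace Finset

variable {ι : Type*} [DecidableEq ι]

theorem prod_offDiag_fst {M : Type*} [CommMonoid M] (s : Finset ι) (f : ι → M) :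
    ∏ p ∈ s.offDiag, f p.1 = ∏ i ∈ s, f i ^ (#s - 1) := by
  rw [prod_finset_product _ s (fun i => s.erase i)
    (fun p => by rw [mem_offDiag, mem_erase]; tauto)]
  exact prod_congr rfl fun i hi => by rw [← card_erase_of_mem hi, ← prod_const]

theorem prod_offDiag_snd {M : Type*} [CommMonoid M] (s : Finset ι) (f : ι → M) :
    ∏ p ∈ s.offDiag, f p.2 = ∏ i ∈ s, f i ^ (#s - 1) := by
  rw [prod_finset_product_right _ s (fun i => s.erase i)
    (fun p => by rw [mem_offDiag, mem_erase, ne_comm]; tauto)]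
  exact prod_congr rfl fun i hi => by rw [← card_erase_of_mem hi, ← prod_const]

theorem prod_offDiag_mul {M : Type*} [CommMonoid M] (s : Finset ι) (f : ι → M) :
    ∏ p ∈ s.offDiag, f p.1 * f p.2 = (∏ i ∈ s, f i) ^ (2 * (#s - 1)) := by
  rw [prod_mul_distrib, prod_offDiag_fst, prod_offDiag_snd, prod_pow, two_mul, pow_add]

theorem sq_sum_eq_sum_sq_add_sum_offDiag {R : Type*} [CommSemiring R] (s : Finset ι)
    (f : ι → R) :
    (∑ i ∈ s, f i) ^ 2 = ∑ i ∈ s, f i ^ 2 + ∑ p ∈ s.offDiag, f p.1 * f p.2 := by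
  rw [sq, sum_mul_sum, ← sum_product', ← diag_union_offDiag,
    sum_union (disjoint_diag_offDiag s), sum_diag]
  simp only [sq]

theorem card_mul_pred_mul_prod_rpow_le_sum_offDiag (s : Finset ι) (f : ι → ℝ)
    (hf : ∀ i ∈ s, 0 ≤ f i) :
    (#s : ℝ) * (#s - 1) * (∏ i ∈ s, f i) ^ ((2 : ℝ) / #s) ≤
      ∑ p ∈ s.offDiag, f p.1 * f p.2 := by
  have hprod : 0 ≤ ∏ i ∈ s, f i := prod_nonneg hf
  have hpairs : ∀ p ∈ s.offDiag, 0 ≤ f p.1 * f p.2 := fun p hp => by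
    rw [mem_offDiag] at hp
    exact mul_nonneg (hf _ hp.1) (hf _ hp.2.1)
  rcases le_or_gt #s 1 with hs | hs
  · have : (#s : ℝ) * (#s - 1) = 0 := by
      interval_cases #s <;> norm_num
    rw [this, zero_mul]
    exact sum_nonneg hpairs
  have hs' : (1 : ℝ) < #s := by exact_mod_cast hs
  have hcard : (#s.offDiag : ℝ) = #s * (#s - 1) := by
    rw [offDiag_card, Nat.cast_sub (Nat.le_mul_self _), Nat.cast_mul]
    ring
  have hN : (0 : ℝ) < #s * (#s - 1) := by nlinarith
  have amgm := Real.geom_mean_le_arith_mean s.offDiag (fun _ => 1) _ (fun _ _ => zero_le_one)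
    (by simp only [sum_const, nsmul_eq_mul, mul_one, hcard]; exact hN) hpairs
  simp only [Real.rpow_one, one_mul, sum_const, nsmul_eq_mul, mul_one, hcard,
    prod_offDiag_mul] at amgm
  have hexp : ((∏ i ∈ s, f i) ^ (2 * (#s - 1))) ^ ((#s : ℝ) * (#s - 1))⁻¹ =
      (∏ i ∈ s, f i) ^ ((2 : ℝ) / #s) := by
    rw [← Real.rpow_natCast, ← Real.rpow_mul hprod, Nat.cast_mul, Nat.cast_sub hs.le]
    have : (#s : ℝ) - 1 ≠ 0 := by linarith
    congr 1
    push_cast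
    field_simp
  rw [hexp, le_div_iff₀ hN] at amgm
  linarith

end Finset

open Finset Matrix

section SingularValues

variable {m : Type*} [Fintype m] [DecidableEq m]

theorem singVals_nonneg (M : Matrix m m ℝ) (i : m) : 0 ≤ singVals M i :=
  Real.sqrt_nonneg _

theorem sum_sq_singVals (M : Matrix m m ℝ) : ∑ i, singVals M i ^ 2 = ∑ i, ∑ j, M i j ^ 2 := by
  have htrace := (isHermitian_mul_conjTranspose_self M).trace_eq_sum_eigenvalues
  simp only [RCLike.ofReal_real_eq_id, id] at htrace
  simp only [singVals, Real.sq_sqrt (eigenvalues_self_mul_conjTranspose_nonneg M _), ← htrace]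
  simp [trace, mul_apply, sq]

theorem prod_singVals (M : Matrix m m ℝ) : ∏ i, singVals M i = |M.det| := by
  have hdet := (isHermitian_mul_conjTranspose_self M).det_eq_prod_eigenvalues
  simp only [RCLike.ofReal_real_eq_id, id, det_mul, det_conjTranspose, star_trivial] at hdet
  simp only [singVals]
  rw [← Real.sqrt_prod _ fun i _ => eigenvalues_self_mul_conjTranspose_nonneg M i, ← hdet,
    Real.sqrt_mul_self_eq_abs]

end SingularValues

section Digraph

variable {n : ℕ} (R : Fin n → Fin n → Prop) [DecidableRel R]

theorem sum_sq_Amat_row (hirr : ∀ i, ¬ R i i) (α : ℝ) (i : Fin n) :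
    ∑ j, Amat α R i j ^ 2 = (1 - α) ^ 2 * outdeg R i + α ^ 2 * (outdeg R i : ℝ) ^ 2 := by
  have hentry : ∀ j, Amat α R i j ^ 2 = (if R i j then (1 - α) ^ 2 else 0) +
      (if i = j then α ^ 2 * (outdeg R i : ℝ) ^ 2 else 0) := by
    intro j
    by_cases hij : i = j
    · subst hij
      simp [Amat, adjMat, hirr i, mul_pow]
    · by_cases hr : R i j <;> simp [Amat, adjMat, hij, hr]
  rw [sum_congr rfl fun j _ => hentry j, sum_add_distrib, sum_ite_eq, if_pos (mem_univ i),
    ← sum_filter, sum_const, nsmul_eq_mul, outdeg]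
  ring

theorem sum_sq_Amat (hirr : ∀ i, ¬ R i i) (α : ℝ) :
    ∑ i, ∑ j, Amat α R i j ^ 2 =
      (1 - α) ^ 2 * ∑ i, (outdeg R i : ℝ) + α ^ 2 * ∑ i, (outdeg R i : ℝ) ^ 2 := by
  simp only [sum_sq_Amat_row R hirr, sum_add_distrib, mul_sum]

end Digraph

theorem stmt_13_general (n : ℕ) (R : Fin n → Fin n → Prop) [DecidableRel R]
    (hirr : ∀ i, ¬ R i i) (α : ℝ)
    (a : ℕ) (ha : a = ∑ i, outdeg R i) :
    Real.sqrt ((1 - α) ^ 2 * a + α ^ 2 * ∑ i, ((outdeg R i : ℝ)) ^ 2 +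
        n * (n - 1) * |(Amat α R).det| ^ ((2 : ℝ) / n)) ≤
      traceNorm (Amat α R) := by
  have hsq : ∑ i, singVals (Amat α R) i ^ 2 =
      (1 - α) ^ 2 * a + α ^ 2 * ∑ i, (outdeg R i : ℝ) ^ 2 := by
    rw [sum_sq_singVals, sum_sq_Amat R hirr, ha, Nat.cast_sum]
  have hamgm := card_mul_pred_mul_prod_rpow_le_sum_offDiag univ (singVals (Amat α R))
    fun i _ => singVals_nonneg _ i
  rw [prod_singVals, card_univ, Fintype.card_fin] at hamgm
  rw [traceNorm, Real.sqrt_le_left (sum_nonneg fun i _ => singVals_nonneg _ i),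
    sq_sum_eq_sum_sq_add_sum_offDiag, hsq]
  exact add_le_add_right hamgm _

/-- Lower bound for the trace norm:
`‖D_α‖_* ≥ √((1-α)² a + α² Σ(d_i⁺)² + n(n-1)|det A_α|^{2/n})`. -/
theorem stmt_13 (n : ℕ) (hn : 2 ≤ n) (R : Fin n → Fin n → Prop) [DecidableRel R]
    (hirr : ∀ i, ¬ R i i) (α : ℝ) (hα0 : 0 ≤ α) (hα1 : α < 1)
    (a : ℕ) (ha : a = ∑ i, outdeg R i) :
    Real.sqrt ((1 - α) ^ 2 * a + α ^ 2 * ∑ i, ((outdeg R i : ℝ)) ^ 2 +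
        n * (n - 1) * |(Amat α R).det| ^ ((2 : ℝ) / n)) ≤
      traceNorm (Amat α R) :=
  stmt_13_general n R hirr α a ha
end

section
/- For α ∈ [0,1), the singular values of the A_α matrix of the complete symmetric digraph K↔_n are n-1 (with multiplicity 1) and |nα - 1| with multiplicity n-1; hence K↔_n attains equality in the bound ‖D_α‖_* ≤ a/n + √((n-1)[(1-α)² a + α² Σ(d_i⁺)² − a²/n²]) with a = n(n-1). -/
/-
`A_α(K↔_n) = (nα - 1) I + (1 - α) J` is a scalar matrix plus a rank-one matrix, and so is its
square. Shifting the characteristic polynomial `X^n - (v ⬝ᵥ u) X^(n-1)` of `u vᵀ` by `a` gives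
`(X - a)^(n-1) (X - a - v ⬝ᵥ u)` for `a I + u vᵀ`, so the singular values are `n - 1` and
`|nα - 1|` (`n - 1` times). The bound is attained because its radicand is
`((n - 1)(nα - 1))²`.
-/

open Matrix Real

/-- The `A_α` matrix of the complete symmetric digraph `K↔_n`:
`α(n-1) I + (1-α)(J - I)`. -/
noncomputable def KnAlpha (n : ℕ) (α : ℝ) : Matrix (Fin n) (Fin n) ℝ :=
  (α * ((n : ℝ) - 1)) • (1 : Matrix (Fin n) (Fin n) ℝ) +
    (1 - α) • (Matrix.of (fun _ _ => (1 : ℝ)) - 1)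

open Polynomial

theorem Matrix.charpoly_scalar_add_vecMulVec {ι R : Type*} [Fintype ι] [DecidableEq ι]
    [Nonempty ι] [CommRing R] (a : R) (u v : ι → R) :
    (scalar ι a + vecMulVec u v).charpoly =
      (X - C a) ^ (Fintype.card ι - 1) * (X - C (a + u ⬝ᵥ v)) := by
  obtain ⟨k, hk⟩ : ∃ k, Fintype.card ι = k + 1 :=
    ⟨_, (Nat.sub_add_cancel Fintype.card_pos).symm⟩
  rw [← neg_neg a, map_neg, ← sub_eq_neg_add, charpoly_sub_scalar, charpoly_vecMulVec]
  simp only [hk, Nat.add_sub_cancel, smul_eq_C_mul, sub_comp, mul_comp, pow_comp, X_comp,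
    C_comp, map_neg, map_add]
  ring

theorem Matrix.roots_charpoly_scalar_add_vecMulVec {ι R : Type*} [Fintype ι] [DecidableEq ι]
    [Nonempty ι] [CommRing R] [IsDomain R] (a : R) (u v : ι → R) :
    (scalar ι a + vecMulVec u v).charpoly.roots =
      (a + u ⬝ᵥ v) ::ₘ Multiset.replicate (Fintype.card ι - 1) a := by
  rw [charpoly_scalar_add_vecMulVec, roots_mul (mul_ne_zero (pow_ne_zero _ (X_sub_C_ne_zero _))
      (X_sub_C_ne_zero _)), roots_pow, roots_X_sub_C, roots_X_sub_C, Multiset.nsmul_singleton,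
    add_comm, Multiset.singleton_add]

theorem traceNorm_eq_sum_map_sqrt_roots_charpoly {m : Type*} [Fintype m] [DecidableEq m]
    (M : Matrix m m ℝ) :
    traceNorm M = ((M * Mᵀ).charpoly.roots.map Real.sqrt).sum := by
  rw [← conjTranspose_eq_transpose_of_trivial,
    (isHermitian_mul_conjTranspose_self M).roots_charpoly_eq_eigenvalues, Multiset.map_map]
  rfl

theorem KnAlpha_eq_scalar_add_smul_vecMulVec (n : ℕ) (α : ℝ) :
    KnAlpha n α = scalar (Fin n) ((n : ℝ) * α - 1) + (1 - α) • vecMulVec 1 1 := by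
  ext i j
  rcases eq_or_ne i j with rfl | h
  · simp [KnAlpha]
    ring
  · simp [KnAlpha, one_apply_ne h, diagonal_apply_ne _ h]

theorem KnAlpha_mul_transpose (n : ℕ) (α : ℝ) :
    KnAlpha n α * (KnAlpha n α)ᵀ =
      scalar (Fin n) (((n : ℝ) * α - 1) ^ 2) +
        ((1 - α) * (2 * ((n : ℝ) * α - 1) + n * (1 - α))) • vecMulVec 1 1 := by
  have hJ : (vecMulVec 1 1 * vecMulVec 1 1 : Matrix (Fin n) (Fin n) ℝ) =
      (n : ℝ) • vecMulVec 1 1 := by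
    rw [vecMulVec_mul_vecMulVec, ← vecMulVec_smul]
    simp [dotProduct]
  simp only [KnAlpha_eq_scalar_add_smul_vecMulVec, transpose_add, transpose_smul,
    transpose_vecMulVec, scalar_apply, ← smul_one_eq_diagonal, transpose_one, add_mul, mul_add,
    smul_mul_assoc, mul_smul_comm, one_mul, mul_one, hJ]
  module

theorem KnAlpha_roots_charpoly_mul_transpose_map_sqrt {n : ℕ} (hn : 1 ≤ n) (α : ℝ) :
    (KnAlpha n α * (KnAlpha n α)ᵀ).charpoly.roots.map Real.sqrt =
      ((n : ℝ) - 1) ::ₘ Multiset.replicate (n - 1) |(n : ℝ) * α - 1| := by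
  have : Nonempty (Fin n) := ⟨⟨0, hn⟩⟩
  have hn' : (1 : ℝ) ≤ n := by exact_mod_cast hn
  have htop : ((n : ℝ) * α - 1) ^ 2 +
      ((1 - α) * (2 * ((n : ℝ) * α - 1) + n * (1 - α))) • (1 : Fin n → ℝ) ⬝ᵥ 1 =
        ((n : ℝ) - 1) ^ 2 := by
    simp [dotProduct]
    ring
  rw [KnAlpha_mul_transpose, ← smul_vecMulVec, roots_charpoly_scalar_add_vecMulVec, htop,
    Multiset.map_cons, Multiset.map_replicate, Fintype.card_fin,
    Real.sqrt_sq (by linarith : (0 : ℝ) ≤ n - 1), Real.sqrt_sq_eq_abs]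

theorem stmt_19_general (n : ℕ) (hn : 1 ≤ n) (α : ℝ) :
    (((KnAlpha n α * (KnAlpha n α)ᵀ).charpoly.roots).map Real.sqrt =
        ((n : ℝ) - 1) ::ₘ Multiset.replicate (n - 1) |(n : ℝ) * α - 1|) ∧
      traceNorm (KnAlpha n α) =
        ((n : ℝ) * ((n : ℝ) - 1)) / n + Real.sqrt (((n : ℝ) - 1) *
          ((1 - α) ^ 2 * ((n : ℝ) * ((n : ℝ) - 1)) +
            α ^ 2 * ((n : ℝ) * ((n : ℝ) - 1) ^ 2) -
            ((n : ℝ) * ((n : ℝ) - 1)) ^ 2 / (n : ℝ) ^ 2)) := by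
  have hn' : (1 : ℝ) ≤ n := by exact_mod_cast hn
  refine ⟨KnAlpha_roots_charpoly_mul_transpose_map_sqrt hn α, ?_⟩
  have hradicand : ((n : ℝ) - 1) *
      ((1 - α) ^ 2 * ((n : ℝ) * ((n : ℝ) - 1)) + α ^ 2 * ((n : ℝ) * ((n : ℝ) - 1) ^ 2) -
        ((n : ℝ) * ((n : ℝ) - 1)) ^ 2 / (n : ℝ) ^ 2) =
        (((n : ℝ) - 1) * ((n : ℝ) * α - 1)) ^ 2 := by
    field_simp
    ring
  rw [traceNorm_eq_sum_map_sqrt_roots_charpoly,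
    KnAlpha_roots_charpoly_mul_transpose_map_sqrt hn α, Multiset.sum_cons, Multiset.sum_replicate,
    nsmul_eq_mul, Nat.cast_sub hn, Nat.cast_one, hradicand,
    Real.sqrt_sq_eq_abs, abs_mul, abs_of_nonneg (by linarith : (0 : ℝ) ≤ n - 1),
    mul_div_cancel_left₀ _ (by positivity : (n : ℝ) ≠ 0)]

/-- The singular values of `A_α(K↔_n)` are `n-1` (once) and `|nα - 1|` with multiplicity
`n-1`; hence `K↔_n` attains equality in the Koolen–Moulton-type upper bound with
`a = n(n-1)` and `Σ(d_i⁺)² = n(n-1)²`. -/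
theorem stmt_19 (n : ℕ) (hn : 1 ≤ n) (α : ℝ) (hα0 : 0 ≤ α) (hα1 : α < 1) :
    (((KnAlpha n α * (KnAlpha n α)ᵀ).charpoly.roots).map Real.sqrt =
        ((n : ℝ) - 1) ::ₘ Multiset.replicate (n - 1) |(n : ℝ) * α - 1|) ∧
      traceNorm (KnAlpha n α) =
        ((n : ℝ) * ((n : ℝ) - 1)) / n + Real.sqrt (((n : ℝ) - 1) *
          ((1 - α) ^ 2 * ((n : ℝ) * ((n : ℝ) - 1)) +
            α ^ 2 * ((n : ℝ) * ((n : ℝ) - 1) ^ 2) -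
            ((n : ℝ) * ((n : ℝ) - 1)) ^ 2 / (n : ℝ) ^ 2)) :=
  stmt_19_general n hn α
end
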